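/- Fix real k₁, k₂. For every n, l ∈ ℕ and every (x,y) ∈ ℝ²: φ_{n,l}(x,y) = exp(−k₂ x²/2 + k₁ y²/2) · φ⁰_{n,l}(x,y), where φ_{n,l} is the generalized family with parameters (k₁,k₂) and φ⁰_{n,l} is the same construction with parameters (0,0) (the standard Landau-level functions). That is, multiplication by T_φ(x,y) = exp(−k₂ x²/2 + k₁ y²/2) maps φ⁰_{n,l} to φ_{n,l} for all n, l. -/

import Mathlib

open MeasureTheory

/-- Partial derivative in the `x`-direction of a function on `ℝ²`. -/
noncomputable def pdx (f : ℝ × ℝ → ℂ) : ℝ × ℝ → ℂ := fun p => fderiv ℝ f p (1, 0)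

/-- Partial derivative in the `y`-direction of a function on `ℝ²`. -/
noncomputable def pdy (f : ℝ × ℝ → ℂ) : ℝ × ℝ → ℂ := fun p => fderiv ℝ f p (0, 1)

/-- `B f = (1/√2)(−i ∂ₓ f − ∂_y f + ((i x/2)(1−2k₂) + (y/2)(1+2k₁)) f)`. -/
noncomputable def Bgll (k₁ k₂ : ℝ) (f : ℝ × ℝ → ℂ) : ℝ × ℝ → ℂ := fun p =>
  (Real.sqrt 2 : ℂ)⁻¹ * (-Complex.I * pdx f p - pdy f p +
    ((Complex.I * (p.1 : ℂ) / 2) * (1 - 2 * (k₂ : ℂ)) +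
      ((p.2 : ℂ) / 2) * (1 + 2 * (k₁ : ℂ))) * f p)

/-- `B′ f = (1/√2)(−∂ₓ f − i ∂_y f + ((x/2)(1−2k₂) + (i y/2)(1+2k₁)) f)`. -/
noncomputable def B'gll (k₁ k₂ : ℝ) (f : ℝ × ℝ → ℂ) : ℝ × ℝ → ℂ := fun p =>
  (Real.sqrt 2 : ℂ)⁻¹ * (-pdx f p - Complex.I * pdy f p +
    (((p.1 : ℂ) / 2) * (1 - 2 * (k₂ : ℂ)) +
      (Complex.I * (p.2 : ℂ) / 2) * (1 + 2 * (k₁ : ℂ))) * f p)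

/-- `φ₀₀(x,y) = (2π)^{−1/2} exp(−(1+2k₂)x²/4 − (1−2k₁)y²/4)`. -/
noncomputable def phi00 (k₁ k₂ : ℝ) : ℝ × ℝ → ℂ := fun p =>
  (Real.sqrt (2 * Real.pi) : ℂ)⁻¹ *
    Complex.exp (-(1 + 2 * (k₂ : ℂ)) * (p.1 : ℂ) ^ 2 / 4 -
      (1 - 2 * (k₁ : ℂ)) * (p.2 : ℂ) ^ 2 / 4)

/-- `φ_{n,l} = (n! l!)^{−1/2} B′ⁿ Bˡ φ₀₀`. -/
noncomputable def phiNL (k₁ k₂ : ℝ) (n l : ℕ) : ℝ × ℝ → ℂ := fun p =>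
  (Real.sqrt (n.factorial * l.factorial) : ℂ)⁻¹ *
    ((B'gll k₁ k₂)^[n] ((Bgll k₁ k₂)^[l] (phi00 k₁ k₂)) p)

/-! ### Auxiliary development -/

/-- The multiplier `T(x,y) = exp(−k₂x²/2 + k₁y²/2)`. -/
noncomputable def Tf (k₁ k₂ : ℝ) : ℝ × ℝ → ℂ := fun p =>
  Complex.exp (-(k₂ : ℂ) * (p.1 : ℂ) ^ 2 / 2 + (k₁ : ℂ) * (p.2 : ℂ) ^ 2 / 2)

lemma hasFDerivAt_Tf (k₁ k₂ : ℝ) (p : ℝ × ℝ) :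
    ∃ L : (ℝ × ℝ) →L[ℝ] ℂ, HasFDerivAt (Tf k₁ k₂) L p ∧
      ∀ v : ℝ × ℝ, L v = (-(k₂ : ℂ) * p.1 * v.1 + (k₁ : ℂ) * p.2 * v.2) * Tf k₁ k₂ p := by
  have hx : HasFDerivAt (fun q : ℝ × ℝ => (q.1 : ℂ))
      (Complex.ofRealCLM.comp (ContinuousLinearMap.fst ℝ ℝ ℝ)) p :=
    (Complex.ofRealCLM.comp (ContinuousLinearMap.fst ℝ ℝ ℝ)).hasFDerivAt
  have hy : HasFDerivAt (fun q : ℝ × ℝ => (q.2 : ℂ))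
      (Complex.ofRealCLM.comp (ContinuousLinearMap.snd ℝ ℝ ℝ)) p :=
    (Complex.ofRealCLM.comp (ContinuousLinearMap.snd ℝ ℝ ℝ)).hasFDerivAt
  have hTeq : Tf k₁ k₂ = (fun q : ℝ × ℝ => Complex.exp
      ((-(k₂:ℂ)/2) * ((q.1:ℂ)*(q.1:ℂ)) + ((k₁:ℂ)/2) * ((q.2:ℂ)*(q.2:ℂ)))) := by
    funext q; unfold Tf; congr 1; ring
  have h : HasFDerivAt (fun q : ℝ × ℝ => Complex.exp
      ((-(k₂:ℂ)/2) * ((q.1:ℂ)*(q.1:ℂ)) + ((k₁:ℂ)/2) * ((q.2:ℂ)*(q.2:ℂ)))) _ p :=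
    (((hx.mul hx).const_mul (-(k₂:ℂ)/2)).add
      (((hy.mul hy).const_mul ((k₁:ℂ)/2)))).cexp
  refine ⟨_, hTeq ▸ h, fun v => ?_⟩
  simp [ContinuousLinearMap.comp_apply, smul_eq_mul, hTeq]
  ring

lemma Tf_diff (k₁ k₂ : ℝ) (p : ℝ × ℝ) : DifferentiableAt ℝ (Tf k₁ k₂) p :=
  (hasFDerivAt_Tf k₁ k₂ p).choose_spec.1.differentiableAt

lemma pdx_Tf (k₁ k₂ : ℝ) (p : ℝ × ℝ) :
    pdx (Tf k₁ k₂) p = -(k₂ : ℂ) * p.1 * Tf k₁ k₂ p := by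
  obtain ⟨L, hL, hLv⟩ := hasFDerivAt_Tf k₁ k₂ p
  have := hLv (1, 0)
  simp only [pdx, hL.fderiv]
  simpa using this

lemma pdy_Tf (k₁ k₂ : ℝ) (p : ℝ × ℝ) :
    pdy (Tf k₁ k₂) p = (k₁ : ℂ) * p.2 * Tf k₁ k₂ p := by
  obtain ⟨L, hL, hLv⟩ := hasFDerivAt_Tf k₁ k₂ p
  have := hLv (0, 1)
  simp only [pdy, hL.fderiv]
  simpa using this

lemma pdx_mul (f g : ℝ × ℝ → ℂ) (p : ℝ × ℝ)
    (hf : DifferentiableAt ℝ f p) (hg : DifferentiableAt ℝ g p) :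
    pdx (fun q => f q * g q) p = pdx f p * g p + f p * pdx g p := by
  simp only [pdx, fderiv_fun_mul hf hg, ContinuousLinearMap.add_apply,
    ContinuousLinearMap.smul_apply, smul_eq_mul]
  ring

lemma pdy_mul (f g : ℝ × ℝ → ℂ) (p : ℝ × ℝ)
    (hf : DifferentiableAt ℝ f p) (hg : DifferentiableAt ℝ g p) :
    pdy (fun q => f q * g q) p = pdy f p * g p + f p * pdy g p := by
  simp only [pdy, fderiv_fun_mul hf hg, ContinuousLinearMap.add_apply,
    ContinuousLinearMap.smul_apply, smul_eq_mul]
  ring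

lemma contDiff_pdx {f : ℝ × ℝ → ℂ} (hf : ContDiff ℝ (⊤ : ℕ∞) f) : ContDiff ℝ (⊤ : ℕ∞) (pdx f) :=
  (hf.fderiv_right (m := (⊤ : ℕ∞)) (by simp)).clm_apply contDiff_const

lemma contDiff_pdy {f : ℝ × ℝ → ℂ} (hf : ContDiff ℝ (⊤ : ℕ∞) f) : ContDiff ℝ (⊤ : ℕ∞) (pdy f) :=
  (hf.fderiv_right (m := (⊤ : ℕ∞)) (by simp)).clm_apply contDiff_const

lemma contDiff_coord1 : ContDiff ℝ (⊤ : ℕ∞) (fun p : ℝ × ℝ => (p.1 : ℂ)) :=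
  Complex.ofRealCLM.contDiff.comp contDiff_fst

lemma contDiff_coord2 : ContDiff ℝ (⊤ : ℕ∞) (fun p : ℝ × ℝ => (p.2 : ℂ)) :=
  Complex.ofRealCLM.contDiff.comp contDiff_snd

lemma contDiff_B (k₁ k₂ : ℝ) {f : ℝ × ℝ → ℂ} (hf : ContDiff ℝ (⊤ : ℕ∞) f) :
    ContDiff ℝ (⊤ : ℕ∞) (Bgll k₁ k₂ f) := by
  unfold Bgll
  exact contDiff_const.mul
    (((contDiff_const.mul (contDiff_pdx hf)).sub (contDiff_pdy hf)).add
      (((((contDiff_const.mul contDiff_coord1).div_const 2).mul contDiff_const).add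
        ((contDiff_coord2.div_const 2).mul contDiff_const)).mul hf))

lemma contDiff_B' (k₁ k₂ : ℝ) {f : ℝ × ℝ → ℂ} (hf : ContDiff ℝ (⊤ : ℕ∞) f) :
    ContDiff ℝ (⊤ : ℕ∞) (B'gll k₁ k₂ f) := by
  unfold B'gll
  exact contDiff_const.mul
    (((contDiff_pdx hf).neg.sub (contDiff_const.mul (contDiff_pdy hf))).add
      ((((contDiff_coord1.div_const 2).mul contDiff_const).add
        (((contDiff_const.mul contDiff_coord2).div_const 2).mul contDiff_const)).mul hf))

lemma B_comm (k₁ k₂ : ℝ) {f : ℝ × ℝ → ℂ} (hf : ContDiff ℝ (⊤ : ℕ∞) f) :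
    Bgll k₁ k₂ (fun q => Tf k₁ k₂ q * f q) = fun p => Tf k₁ k₂ p * Bgll 0 0 f p := by
  funext p
  have hfd : DifferentiableAt ℝ f p := (hf.differentiable (by simp)) p
  unfold Bgll
  rw [pdx_mul _ _ _ (Tf_diff k₁ k₂ p) hfd, pdy_mul _ _ _ (Tf_diff k₁ k₂ p) hfd,
    pdx_Tf, pdy_Tf]
  push_cast
  ring

lemma B'_comm (k₁ k₂ : ℝ) {f : ℝ × ℝ → ℂ} (hf : ContDiff ℝ (⊤ : ℕ∞) f) :
    B'gll k₁ k₂ (fun q => Tf k₁ k₂ q * f q) = fun p => Tf k₁ k₂ p * B'gll 0 0 f p := by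
  funext p
  have hfd : DifferentiableAt ℝ f p := (hf.differentiable (by simp)) p
  unfold B'gll
  rw [pdx_mul _ _ _ (Tf_diff k₁ k₂ p) hfd, pdy_mul _ _ _ (Tf_diff k₁ k₂ p) hfd,
    pdx_Tf, pdy_Tf]
  push_cast
  ring

lemma contDiff_iter_B (k₁ k₂ : ℝ) {f : ℝ × ℝ → ℂ} (hf : ContDiff ℝ (⊤ : ℕ∞) f) (l : ℕ) :
    ContDiff ℝ (⊤ : ℕ∞) ((Bgll k₁ k₂)^[l] f) := by
  induction l with
  | zero => simpa using hf
  | succ l ih => rw [Function.iterate_succ_apply']; exact contDiff_B k₁ k₂ ih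

lemma contDiff_iter_B' (k₁ k₂ : ℝ) {f : ℝ × ℝ → ℂ} (hf : ContDiff ℝ (⊤ : ℕ∞) f) (n : ℕ) :
    ContDiff ℝ (⊤ : ℕ∞) ((B'gll k₁ k₂)^[n] f) := by
  induction n with
  | zero => simpa using hf
  | succ n ih => rw [Function.iterate_succ_apply']; exact contDiff_B' k₁ k₂ ih

lemma iter_B_comm (k₁ k₂ : ℝ) {f : ℝ × ℝ → ℂ} (hf : ContDiff ℝ (⊤ : ℕ∞) f) (l : ℕ) :
    (Bgll k₁ k₂)^[l] (fun q => Tf k₁ k₂ q * f q) =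
      fun p => Tf k₁ k₂ p * (Bgll 0 0)^[l] f p := by
  induction l with
  | zero => simp
  | succ l ih =>
      rw [Function.iterate_succ_apply', ih, B_comm k₁ k₂ (contDiff_iter_B 0 0 hf l),
        Function.iterate_succ_apply']

lemma iter_B'_comm (k₁ k₂ : ℝ) {f : ℝ × ℝ → ℂ} (hf : ContDiff ℝ (⊤ : ℕ∞) f) (n : ℕ) :
    (B'gll k₁ k₂)^[n] (fun q => Tf k₁ k₂ q * f q) =
      fun p => Tf k₁ k₂ p * (B'gll 0 0)^[n] f p := by
  induction n with
  | zero => simp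
  | succ n ih =>
      rw [Function.iterate_succ_apply', ih, B'_comm k₁ k₂ (contDiff_iter_B' 0 0 hf n),
        Function.iterate_succ_apply']

lemma contDiff_phi00 : ContDiff ℝ (⊤ : ℕ∞) (phi00 0 0) := by
  unfold phi00
  refine contDiff_const.mul (Complex.contDiff_exp.comp ?_)
  exact ((contDiff_const.mul (contDiff_coord1.pow 2)).div_const 4).sub
    ((contDiff_const.mul (contDiff_coord2.pow 2)).div_const 4)

lemma phi00_eq (k₁ k₂ : ℝ) :
    phi00 k₁ k₂ = fun q => Tf k₁ k₂ q * phi00 0 0 q := by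
  funext q
  unfold phi00 Tf
  have h : Complex.exp (-(1 + 2 * (k₂ : ℂ)) * (q.1 : ℂ) ^ 2 / 4 -
      (1 - 2 * (k₁ : ℂ)) * (q.2 : ℂ) ^ 2 / 4) =
      Complex.exp (-(k₂ : ℂ) * (q.1 : ℂ) ^ 2 / 2 + (k₁ : ℂ) * (q.2 : ℂ) ^ 2 / 2) *
      Complex.exp (-(1 + 2 * ((0:ℝ) : ℂ)) * (q.1 : ℂ) ^ 2 / 4 -
        (1 - 2 * ((0:ℝ) : ℂ)) * (q.2 : ℂ) ^ 2 / 4) := by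
    rw [← Complex.exp_add]; congr 1; push_cast; ring
  rw [h]; ring

theorem statement10 (k₁ k₂ : ℝ) (n l : ℕ) (p : ℝ × ℝ) :
    phiNL k₁ k₂ n l p =
      Complex.exp (-(k₂ : ℂ) * (p.1 : ℂ) ^ 2 / 2 + (k₁ : ℂ) * (p.2 : ℂ) ^ 2 / 2) *
        phiNL 0 0 n l p := by
  have key : (B'gll k₁ k₂)^[n] ((Bgll k₁ k₂)^[l] (phi00 k₁ k₂)) =
      fun q => Tf k₁ k₂ q * (B'gll 0 0)^[n] ((Bgll 0 0)^[l] (phi00 0 0)) q := by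
    rw [phi00_eq k₁ k₂, iter_B_comm k₁ k₂ contDiff_phi00 l,
      iter_B'_comm k₁ k₂ (contDiff_iter_B 0 0 contDiff_phi00 l) n]
  show (Real.sqrt (n.factorial * l.factorial) : ℂ)⁻¹ * _ = _
  rw [key]
  show _ = Tf k₁ k₂ p * ((Real.sqrt (n.factorial * l.factorial) : ℂ)⁻¹ * _)
  ring
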